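/- Let K be the Kalton–Peck map on real ℓ₂ and let e₁,…,eₙ be the first n standard unit vectors, n ≥ 1. Then K(eᵢ) = 0 for each i, and for every choice of signs ε₁,…,εₙ ∈ {−1,1}: K(ε₁e₁ + ⋯ + εₙeₙ) = −(log n / 2)·(ε₁e₁ + ⋯ + εₙeₙ); consequently ‖K(∑ᵢ εᵢeᵢ) − ∑ᵢ εᵢ K(eᵢ)‖₂ = (√n · log n)/2. -/

import Mathlib

/-! A vector whose nonzero coordinates all have the same modulus `c` is an eigenvector of the
Kalton–Peck map, with eigenvalue `log (c / ‖x‖)`. Both `eᵢ` and `∑ εᵢ eᵢ` are of this kind, with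
`c = 1` and norms `1` and `√n` respectively, so `K eᵢ = 0` and `K (∑ εᵢ eᵢ) = log (1/√n) • ∑ εᵢ eᵢ`. -/

/-- The Kalton–Peck map on real `ℓ₂`, defined pointwise:
`(K x)ₘ = xₘ · log(|xₘ| / ‖x‖₂)` (with the convention `Real.log 0 = 0`). -/
noncomputable def kaltonPeckSeqR (x : lp (fun _ : ℕ => ℝ) 2) : ℕ → ℝ :=
  fun m => x m * Real.log (|x m| / ‖x‖)

open Finset

local notation "ℓ₂" => lp (fun _ : ℕ => ℝ) 2

theorem kaltonPeckSeqR_of_abs_eq_ite {x : ℓ₂} {s : Finset ℕ} {c : ℝ}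
    (hx : ∀ m, |x m| = if m ∈ s then c else 0) (m : ℕ) :
    kaltonPeckSeqR x m = Real.log (c / ‖x‖) * x m := by
  by_cases hm : m ∈ s
  · simp only [kaltonPeckSeqR, hx m, hm, if_true, mul_comm]
  · have hxm : x m = 0 := by simpa [hm] using hx m
    simp [kaltonPeckSeqR, hxm]

theorem lp_two_norm_of_abs_eq_ite {x : ℓ₂} {s : Finset ℕ} {c : ℝ} (hc : 0 ≤ c)
    (hx : ∀ m, |x m| = if m ∈ s then c else 0) :
    ‖x‖ = √(#s : ℝ) * c := by
  have hsq : ‖x‖ ^ 2 = #s * c ^ 2 := by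
    have h := lp.norm_rpow_eq_tsum (p := 2) (by norm_num) x
    simp only [ENNReal.toReal_ofNat, Real.rpow_two, Real.norm_eq_abs, hx] at h
    rw [h, tsum_eq_sum (s := s) fun m hm => by simp [hm]]
    simp [sum_ite_mem]
  rw [← Real.sqrt_sq (norm_nonneg x), hsq, Real.sqrt_mul (by positivity), Real.sqrt_sq hc]

theorem sum_smul_apply_of_apply_eq_ite {n : ℕ} (a : Fin n → ℝ) {e : Fin n → ℓ₂}
    (he : ∀ (i : Fin n) (m : ℕ), e i m = if m = (i : ℕ) then 1 else 0) (m : ℕ) :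
    (∑ i, a i • e i) m = if h : m < n then a ⟨m, h⟩ else 0 := by
  rw [lp.coeFn_sum, Finset.sum_apply]
  simp only [lp.coeFn_smul, Pi.smul_apply, smul_eq_mul, he]
  split_ifs with h
  · rw [sum_eq_single ⟨m, h⟩] <;> intros <;> simp_all [Fin.ext_iff, eq_comm]
  · exact sum_eq_zero fun i _ => by simp [show m ≠ i by omega]

theorem stmt_14_general (n : ℕ) (ε : Fin n → ℝ)
    (hε : ∀ i, ε i = 1 ∨ ε i = -1)
    (e : Fin n → lp (fun _ : ℕ => ℝ) 2)
    (he : ∀ (i : Fin n) (m : ℕ), e i m = if m = (i : ℕ) then 1 else 0)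
    (x : lp (fun _ : ℕ => ℝ) 2) (hx : x = ∑ i, ε i • e i) :
    (∀ (i : Fin n) (m : ℕ), kaltonPeckSeqR (e i) m = 0) ∧
    (∀ m : ℕ, kaltonPeckSeqR x m = -(Real.log n / 2) * x m) ∧
    (∀ y : lp (fun _ : ℕ => ℝ) 2,
      (∀ m : ℕ, y m = kaltonPeckSeqR x m - ∑ i, ε i * kaltonPeckSeqR (e i) m) →
      ‖y‖ = Real.sqrt n * Real.log n / 2) := by
  have he_abs (i : Fin n) (m : ℕ) : |e i m| = if m ∈ ({(i : ℕ)} : Finset ℕ) then 1 else 0 := by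
    by_cases h : m = i <;> simp [he, h]
  have hx_abs (m : ℕ) : |x m| = if m ∈ range n then 1 else 0 := by
    rw [hx, sum_smul_apply_of_apply_eq_ite ε he]
    simp only [mem_range]
    split_ifs with h
    · rcases hε ⟨m, h⟩ with h' | h' <;> simp [h']
    · simp
  have hK_e (i : Fin n) (m : ℕ) : kaltonPeckSeqR (e i) m = 0 := by
    simp [kaltonPeckSeqR_of_abs_eq_ite (he_abs i), lp_two_norm_of_abs_eq_ite zero_le_one (he_abs i)]
  have hnorm_x : ‖x‖ = √n := by simpa using lp_two_norm_of_abs_eq_ite zero_le_one hx_abs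
  have hK_x (m : ℕ) : kaltonPeckSeqR x m = -(Real.log n / 2) * x m := by
    rw [kaltonPeckSeqR_of_abs_eq_ite hx_abs, hnorm_x, one_div, Real.log_inv,
      Real.log_sqrt n.cast_nonneg]
  refine ⟨hK_e, hK_x, fun y hy => ?_⟩
  have hy_eq : y = (-(Real.log n / 2)) • x := lp.ext <| funext fun m => by
    rw [lp.coeFn_smul, Pi.smul_apply, smul_eq_mul, hy, hK_x]
    simp [hK_e]
  have hlog : 0 ≤ Real.log n := Real.log_natCast_nonneg n
  rw [hy_eq, norm_smul, hnorm_x, norm_neg, Real.norm_of_nonneg (by positivity)]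
  ring

/-- for the first `n` standard unit vectors of real `ℓ₂` we have
`K eᵢ = 0`, `K(∑ εᵢ eᵢ) = −(log n / 2)·(∑ εᵢ eᵢ)` for any signs `εᵢ ∈ {−1,1}`, and
`‖K(∑ εᵢ eᵢ) − ∑ εᵢ K(eᵢ)‖₂ = √n · log n / 2`. -/
theorem stmt_14 (n : ℕ) (hn : 1 ≤ n) (ε : Fin n → ℝ)
    (hε : ∀ i, ε i = 1 ∨ ε i = -1)
    (e : Fin n → lp (fun _ : ℕ => ℝ) 2)
    (he : ∀ (i : Fin n) (m : ℕ), e i m = if m = (i : ℕ) then 1 else 0)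
    (x : lp (fun _ : ℕ => ℝ) 2) (hx : x = ∑ i, ε i • e i) :
    (∀ (i : Fin n) (m : ℕ), kaltonPeckSeqR (e i) m = 0) ∧
    (∀ m : ℕ, kaltonPeckSeqR x m = -(Real.log n / 2) * x m) ∧
    (∀ y : lp (fun _ : ℕ => ℝ) 2,
      (∀ m : ℕ, y m = kaltonPeckSeqR x m - ∑ i, ε i * kaltonPeckSeqR (e i) m) →
      ‖y‖ = Real.sqrt n * Real.log n / 2) :=
  stmt_14_general n ε hε e he x hx
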